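/- Fix reals ω₀ > 0, γ > 0, θ > 0 and an integer ℓ. For each integer n ≥ 1 let G^n_{ω₀,θ,ℓ}(x, y) = Σ_{j=0}^n ψ_j(x) ψ_j(y)/(λ_j + ω₀² − (2πℓ/θ)² + i·4γπℓ/θ), where ψ_j(x) = ((2 − δ_{0,j})/(n+1))^{1/2} cos(π j (2x+1)/(2(n+1))) and λ_j = 4 sin²(π j/(2(n+1))). Then lim_{n→∞} Σ_{x=0}^n |G^n_{ω₀,θ,ℓ}(x, n)|² = 2 ∫₀¹ cos²(πz/2) · { [4 sin²(πz/2) + ω₀² − (2πℓ/θ)²]² + (4γπℓ/θ)² }^{−1} dz. -/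

import Mathlib

open Real Filter

noncomputable section

/-- The Neumann eigenvectors `ψ_j(x) = ((2 − δ_{0,j})/(n+1))^{1/2} cos(πj(2x+1)/(2(n+1)))`. -/
def psiN (n j x : ℕ) : ℝ :=
  Real.sqrt ((2 - if j = 0 then 1 else 0) / (n + 1)) *
    Real.cos (π * j * (2 * x + 1) / (2 * (n + 1)))

/-- The Green's function `G^n_{ω₀,θ,ℓ}(x,y)` of the complex operator
`[ω₀² − (2πℓ/θ)² + i·4γπℓ/θ] − Δ_N` on `{0,…,n}`, in its eigenfunction representation. -/
def greenNC (n : ℕ) (ω₀ γ θ : ℝ) (l : ℤ) (x y : ℕ) : ℂ :=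
  ∑ j ∈ Finset.range (n + 1),
    ((psiN n j x * psiN n j y : ℝ) : ℂ) /
      (((4 * Real.sin (π * j / (2 * (n + 1))) ^ 2 + ω₀ ^ 2 - (2 * π * l / θ) ^ 2 : ℝ) : ℂ)
        + Complex.I * ((4 * γ * π * l / θ : ℝ) : ℂ))


/-! Expanding the column `G(·, n)` in the orthonormal Neumann eigenbasis `ψ_j` (a discrete
cosine transform), Parseval gives `Σ_x |G(x, n)|² = Σ_j ψ_j(n)² / |d_j|²`, where `d_j` is the
eigenvalue of the complex operator on `ψ_j`. Since `ψ_j(n)² = (2 − δ_{0j}) cos²(πj/(2(n+1)))/(n+1)`,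
this is twice the left Riemann sum of the limiting integrand at the nodes `j/(n+1)`, minus the
`j = 0` term, which is `O(1/n)`. The integrand is continuous since `|d|²` never vanishes: for
`ℓ ≠ 0` its imaginary part `4γπℓ/θ` is nonzero, and for `ℓ = 0` its real part is at least `ω₀²`. -/

open Finset ComplexConjugate

theorem two_sin_mul_sum_cos_odd_mul (β : ℝ) (N : ℕ) :
    2 * sin β * ∑ x ∈ range N, cos ((2 * x + 1) * β) = sin (2 * N * β) := by
  induction N with
  | zero => simp
  | succ n ih =>
    rw [sum_range_succ, mul_add, ih]
    push_cast
    rw [show 2 * ((n : ℝ) + 1) * β = (2 * n + 1) * β + β by ring,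
      show 2 * (n : ℝ) * β = (2 * n + 1) * β - β by ring, sin_add, sin_sub]
    ring

theorem sum_cos_pi_mul_odd_div {N : ℕ} {m : ℤ} (hm : |m| < 2 * N) :
    ∑ x ∈ range N, cos (π * m * (2 * x + 1) / (2 * N)) = if m = 0 then (N : ℝ) else 0 := by
  split_ifs with hm0
  · simp [hm0]
  have hN : (0 : ℝ) < N := by
    have := (abs_nonneg m).trans_lt hm
    norm_cast at this ⊢
    omega
  have hmR : |(m : ℝ)| < 2 * N := by exact_mod_cast hm
  set β : ℝ := m / (2 * N) * π
  have hβ_abs : |β| < π := by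
    rw [abs_mul, abs_div, abs_of_pos (by positivity : (0 : ℝ) < 2 * N), abs_of_pos pi_pos,
      div_mul_eq_mul_div, div_lt_iff₀ (by positivity)]
    nlinarith [pi_pos]
  have hsin : sin β ≠ 0 := by
    rw [Ne, sin_eq_zero_iff_of_lt_of_lt (abs_lt.1 hβ_abs).1 (abs_lt.1 hβ_abs).2]
    exact mul_ne_zero (div_ne_zero (by exact_mod_cast hm0) (by positivity)) pi_ne_zero
  have hperiod : sin (2 * N * β) = 0 := by
    rw [show 2 * N * β = m * π by simp only [β]; field_simp]
    exact sin_int_mul_pi m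
  have hprod_zero := (two_sin_mul_sum_cos_odd_mul β N).trans hperiod
  have hsum : ∑ x ∈ range N, cos (π * m * (2 * x + 1) / (2 * N))
      = ∑ x ∈ range N, cos ((2 * x + 1) * β) :=
    sum_congr rfl fun x _ => by simp only [β]; congr 1; field_simp
  rw [hsum]
  exact (mul_eq_zero.1 hprod_zero).resolve_left (mul_ne_zero two_ne_zero hsin)

theorem sum_cos_mul_cos_pi_mul_odd_div {N j k : ℕ} (hj : j < N) (hk : k < N) :
    ∑ x ∈ range N, cos (π * j * (2 * x + 1) / (2 * N)) * cos (π * k * (2 * x + 1) / (2 * N))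
      = if j = k then (if j = 0 then (N : ℝ) else N / 2) else 0 := by
  have hprod : ∀ x : ℕ,
      cos (π * j * (2 * x + 1) / (2 * N)) * cos (π * k * (2 * x + 1) / (2 * N))
        = (cos (π * ((j - k : ℤ) : ℝ) * (2 * x + 1) / (2 * N))
          + cos (π * ((j + k : ℤ) : ℝ) * (2 * x + 1) / (2 * N))) / 2 := by
    intro x
    push_cast
    rw [show π * (j - k) * (2 * x + 1) / (2 * N)
        = π * j * (2 * x + 1) / (2 * N) - π * k * (2 * x + 1) / (2 * N) by ring,
      show π * (j + k) * (2 * x + 1) / (2 * N)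
        = π * j * (2 * x + 1) / (2 * N) + π * k * (2 * x + 1) / (2 * N) by ring,
      cos_sub, cos_add]
    ring
  rw [sum_congr rfl fun x _ => hprod x, ← sum_div, sum_add_distrib,
    sum_cos_pi_mul_odd_div (by rw [abs_lt]; omega),
    sum_cos_pi_mul_odd_div (by rw [abs_lt]; omega)]
  by_cases hjk : j = k
  · subst hjk
    by_cases hj0 : j = 0 <;> simp [hj0]
  · simp only [hjk, if_false]
    rw [if_neg (by omega), if_neg (by omega)]
    simp

theorem psiN_orthonormal {n j k : ℕ} (hj : j ≤ n) (hk : k ≤ n) :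
    ∑ x ∈ range (n + 1), psiN n j x * psiN n k x = if j = k then 1 else 0 := by
  have hcos := sum_cos_mul_cos_pi_mul_odd_div (N := n + 1) (Nat.lt_succ_of_le hj)
    (Nat.lt_succ_of_le hk)
  push_cast at hcos
  simp only [psiN, mul_mul_mul_comm _ (cos _), ← mul_sum, hcos]
  by_cases hjk : j = k
  · subst hjk
    have hc : (0 : ℝ) ≤ (2 - if j = 0 then 1 else 0) / (n + 1) := by
      split_ifs <;> norm_num <;> positivity
    rw [mul_self_sqrt hc]
    split_ifs <;> field_simp <;> norm_num
  · simp [hjk]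

theorem sum_norm_sq_sum_ofReal_mul {ι κ : Type*} [DecidableEq κ] (s : Finset ι) (t : Finset κ)
    (p : κ → ι → ℝ) (c : κ → ℂ)
    (horth : ∀ j ∈ t, ∀ k ∈ t, ∑ x ∈ s, p j x * p k x = if j = k then 1 else 0) :
    ∑ x ∈ s, ‖∑ j ∈ t, (p j x : ℂ) * c j‖ ^ 2 = ∑ j ∈ t, ‖c j‖ ^ 2 := by
  apply Complex.ofReal_injective
  push_cast
  simp only [← Complex.mul_conj', map_sum, map_mul, Complex.conj_ofReal, sum_mul_sum]
  calc ∑ x ∈ s, ∑ j ∈ t, ∑ k ∈ t, (p j x : ℂ) * c j * ((p k x : ℂ) * conj (c k))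
      = ∑ j ∈ t, ∑ k ∈ t, ((∑ x ∈ s, p j x * p k x : ℝ) : ℂ) * (c j * conj (c k)) := by
        rw [sum_comm]
        refine sum_congr rfl fun j _ => ?_
        rw [sum_comm]
        refine sum_congr rfl fun k _ => ?_
        push_cast
        rw [sum_mul]
        exact sum_congr rfl fun x _ => by ring
    _ = ∑ j ∈ t, c j * conj (c j) := by
        refine sum_congr rfl fun j hj => ?_
        have hdiag : ∀ k ∈ t, ((∑ x ∈ s, p j x * p k x : ℝ) : ℂ) * (c j * conj (c k))
            = if j = k then c j * conj (c k) else 0 := fun k hk => by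
          rw [horth j hj k hk]
          split_ifs <;> simp
        rw [sum_congr rfl hdiag, sum_ite_eq, if_pos hj]

theorem abs_mul_sub_integral_le {f : ℝ → ℝ} {a b ε : ℝ} (hab : a ≤ b)
    (hf : IntervalIntegrable f MeasureTheory.volume a b)
    (hε : ∀ z ∈ Set.Icc a b, |f a - f z| ≤ ε) :
    |(b - a) * f a - ∫ z in a..b, f z| ≤ ε * (b - a) := by
  have hbound := intervalIntegral.norm_integral_le_of_norm_le_const (f := fun z => f a - f z)
    fun z hz => hε z (Set.Ioc_subset_Icc_self (Set.uIoc_of_le hab ▸ hz))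
  rw [intervalIntegral.integral_sub intervalIntegrable_const hf] at hbound
  simpa [abs_of_nonneg (sub_nonneg.2 hab)] using hbound

theorem abs_sum_range_div_sub_integral_le {f : ℝ → ℝ} {ε δ : ℝ}
    (hf : ContinuousOn f (Set.Icc 0 1))
    (hfδ : ∀ x ∈ Set.Icc (0 : ℝ) 1, ∀ y ∈ Set.Icc (0 : ℝ) 1, dist x y < δ → dist (f x) (f y) < ε)
    {n : ℕ} (hmesh : 1 / ((n : ℝ) + 1) < δ) :
    |∑ j ∈ range (n + 1), f (j / (n + 1)) / (n + 1) - ∫ z in (0 : ℝ)..1, f z| ≤ ε := by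
  have hn1 : (0 : ℝ) < n + 1 := by positivity
  set a : ℕ → ℝ := fun j => j / (n + 1)
  have hstep : ∀ j, a (j + 1) - a j = 1 / (n + 1) := fun j => by
    simp only [a]; push_cast; field_simp; ring
  have hle : ∀ j, a j ≤ a (j + 1) := fun j => by linarith [hstep j, one_div_pos.2 hn1]
  have hsub : ∀ j < n + 1, Set.Icc (a j) (a (j + 1)) ⊆ Set.Icc 0 1 := fun j hj =>
    Set.Icc_subset_Icc (by positivity) (by
      simp only [a]; push_cast; rw [div_le_one hn1]; exact_mod_cast hj)
  have hint : ∀ j < n + 1, IntervalIntegrable f MeasureTheory.volume (a j) (a (j + 1)) :=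
    fun j hj => (hf.mono (hsub j hj)).intervalIntegrable_of_Icc (hle j)
  have hcell : ∀ j ∈ range (n + 1),
      |f (a j) / (n + 1) - ∫ z in a j..a (j + 1), f z| ≤ ε * (1 / (n + 1)) := by
    intro j hj
    rw [mem_range] at hj
    rw [← hstep j, div_eq_mul_one_div, mul_comm, ← hstep j]
    refine abs_mul_sub_integral_le (hle j) (hint j hj)
      fun z hz => (abs_sub_comm _ _).trans_le (le_of_lt ?_)
    refine hfδ z (hsub j hj hz) (a j) (hsub j hj (Set.left_mem_Icc.2 (hle j))) ?_
    rw [Real.dist_eq, abs_of_nonneg (by linarith [hz.1])]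
    linarith [hz.2, hstep j]
  have hpartition :
      ∫ z in (0 : ℝ)..1, f z = ∑ j ∈ range (n + 1), ∫ z in a j..a (j + 1), f z := by
    rw [intervalIntegral.sum_integral_adjacent_intervals hint]
    simp [a, hn1.ne']
  calc |∑ j ∈ range (n + 1), f (a j) / (n + 1) - ∫ z in (0 : ℝ)..1, f z|
      = |∑ j ∈ range (n + 1), (f (a j) / (n + 1) - ∫ z in a j..a (j + 1), f z)| := by
        rw [hpartition, sum_sub_distrib]
    _ ≤ ∑ _j ∈ range (n + 1), ε * (1 / (n + 1)) :=
        (abs_sum_le_sum_abs _ _).trans (sum_le_sum hcell)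
    _ = ε := by
        rw [sum_const, card_range, nsmul_eq_mul]
        push_cast
        field_simp

theorem tendsto_sum_range_div_integral {f : ℝ → ℝ} (hf : ContinuousOn f (Set.Icc 0 1)) :
    Tendsto (fun n : ℕ => ∑ j ∈ range (n + 1), f (j / (n + 1)) / (n + 1)) atTop
      (nhds (∫ z in (0 : ℝ)..1, f z)) := by
  rw [Metric.tendsto_atTop]
  intro ε hε
  obtain ⟨δ, hδ, hfδ⟩ := Metric.uniformContinuousOn_iff.1
    (isCompact_Icc.uniformContinuousOn_of_continuous hf) (ε / 2) (half_pos hε)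
  obtain ⟨M, hM⟩ := exists_nat_gt (1 / δ)
  refine ⟨M, fun n hn => ?_⟩
  have hmesh : 1 / ((n : ℝ) + 1) < δ :=
    (one_div_lt (by positivity) hδ).2 (by linarith [(Nat.cast_le (α := ℝ)).2 hn])
  rw [Real.dist_eq]
  linarith [abs_sum_range_div_sub_integral_le hf hfδ hmesh]

def greenColumnDensity (ω₀ γ θ : ℝ) (l : ℤ) (z : ℝ) : ℝ :=
  cos (π * z / 2) ^ 2 /
    ((4 * sin (π * z / 2) ^ 2 + ω₀ ^ 2 - (2 * π * l / θ) ^ 2) ^ 2 + (4 * γ * π * l / θ) ^ 2)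

theorem resolvent_normSq_pos {ω₀ γ θ u : ℝ} (hω : ω₀ ≠ 0) (hγ : γ ≠ 0) (hθ : θ ≠ 0) (l : ℤ)
    (hu : 0 ≤ u) : 0 < (u + ω₀ ^ 2 - (2 * π * l / θ) ^ 2) ^ 2 + (4 * γ * π * l / θ) ^ 2 := by
  rcases eq_or_ne l 0 with rfl | hl
  · simp only [Int.cast_zero, mul_zero, zero_div, ne_eq, OfNat.ofNat_ne_zero,
      not_false_eq_true, zero_pow, sub_zero, add_zero]
    positivity
  · have hl' : (l : ℝ) ≠ 0 := Int.cast_ne_zero.2 hl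
    positivity

theorem continuous_greenColumnDensity {ω₀ γ θ : ℝ} (hω : ω₀ ≠ 0) (hγ : γ ≠ 0) (hθ : θ ≠ 0)
    (l : ℤ) : Continuous (greenColumnDensity ω₀ γ θ l) :=
  Continuous.div (by fun_prop) (by fun_prop) fun z =>
    (resolvent_normSq_pos hω hγ hθ l (by positivity)).ne'

theorem psiN_sq_last (n j : ℕ) :
    psiN n j n ^ 2 = (2 - if j = 0 then 1 else 0) / (n + 1) * cos (π * j / (2 * (n + 1))) ^ 2 := by
  have hc : (0 : ℝ) ≤ (2 - if j = 0 then 1 else 0) / (n + 1) := by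
    split_ifs <;> norm_num <;> positivity
  rw [psiN, mul_pow, sq_sqrt hc]
  have hreflect : π * j * (2 * n + 1) / (2 * (n + 1)) = j * π - π * j / (2 * (n + 1)) := by
    field_simp
    ring
  rw [hreflect, cos_sub, sin_nat_mul_pi, zero_mul, add_zero, mul_pow, cos_nat_mul_pi,
    ← pow_mul, mul_comm j 2, pow_mul, neg_one_sq, one_pow, one_mul]

theorem sum_norm_sq_greenNC_column (n : ℕ) (ω₀ γ θ : ℝ) (l : ℤ) :
    ∑ x ∈ range (n + 1), ‖greenNC n ω₀ γ θ l x n‖ ^ 2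
      = 2 * ∑ j ∈ range (n + 1), greenColumnDensity ω₀ γ θ l (j / (n + 1)) / (n + 1)
        - greenColumnDensity ω₀ γ θ l 0 / (n + 1) := by
  set d : ℕ → ℂ := fun j =>
    ((4 * sin (π * j / (2 * (n + 1))) ^ 2 + ω₀ ^ 2 - (2 * π * l / θ) ^ 2 : ℝ) : ℂ)
      + Complex.I * ((4 * γ * π * l / θ : ℝ) : ℂ)
  have hgreen : ∀ x,
      greenNC n ω₀ γ θ l x n = ∑ j ∈ range (n + 1), (psiN n j x : ℂ) * (psiN n j n / d j) :=
    fun x => sum_congr rfl fun j _ => by rw [Complex.ofReal_mul, mul_div_assoc]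
  simp only [hgreen]
  rw [sum_norm_sq_sum_ofReal_mul _ _ _ _ fun j hj k hk =>
    psiN_orthonormal (Nat.lt_succ_iff.1 (mem_range.1 hj)) (Nat.lt_succ_iff.1 (mem_range.1 hk))]
  have hterm : ∀ j : ℕ, ‖(psiN n j n : ℂ) / d j‖ ^ 2
      = (2 - if j = 0 then 1 else 0) * (greenColumnDensity ω₀ γ θ l (j / (n + 1)) / (n + 1)) := by
    intro j
    rw [norm_div, div_pow, Complex.norm_real, Real.norm_eq_abs, sq_abs, Complex.sq_norm]
    dsimp only [d]
    rw [mul_comm Complex.I, Complex.normSq_add_mul_I, psiN_sq_last, greenColumnDensity,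
      show π * (j / (n + 1)) / 2 = π * j / (2 * (n + 1)) by field_simp]
    ring
  simp only [hterm, sub_mul, sum_sub_distrib, ← mul_sum, ite_mul, one_mul, zero_mul,
    sum_ite_eq', mem_range, Nat.zero_lt_succ, if_true, Nat.cast_zero, zero_div]

/-- The squared `ℓ²`-norm of the boundary column of `G^n_{ω₀,θ,ℓ}` converges:
`lim_{n→∞} Σ_{x=0}^n |G^n_{ω₀,θ,ℓ}(x,n)|²
  = 2 ∫₀¹ cos²(πz/2) ([4 sin²(πz/2) + ω₀² − (2πℓ/θ)²]² + (4γπℓ/θ)²)⁻¹ dz`. -/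
theorem greenNC_column_l2_limit (ω₀ γ θ : ℝ) (hω : 0 < ω₀) (hγ : 0 < γ) (hθ : 0 < θ)
    (l : ℤ) :
    Tendsto (fun n : ℕ =>
        ∑ x ∈ Finset.range (n + 1), ‖greenNC n ω₀ γ θ l x n‖ ^ 2)
      atTop
      (nhds (2 * ∫ z in (0:ℝ)..1, Real.cos (π * z / 2) ^ 2 /
        ((4 * Real.sin (π * z / 2) ^ 2 + ω₀ ^ 2 - (2 * π * l / θ) ^ 2) ^ 2
          + (4 * γ * π * l / θ) ^ 2))) := by
  have hriemann := (tendsto_sum_range_div_integral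
    (continuous_greenColumnDensity hω.ne' hγ.ne' hθ.ne' l).continuousOn).const_mul 2
  have hendpoint :
      Tendsto (fun n : ℕ => greenColumnDensity ω₀ γ θ l 0 / (n + 1)) atTop (nhds 0) := by
    have h := (tendsto_one_div_add_atTop_nhds_zero_nat (𝕜 := ℝ)).const_mul
      (greenColumnDensity ω₀ γ θ l 0)
    rw [mul_zero] at h
    exact h.congr fun n => mul_one_div _ _
  have hlimit := hriemann.sub hendpoint
  rw [sub_zero] at hlimit
  exact hlimit.congr fun n => (sum_norm_sq_greenNC_column n ω₀ γ θ l).symm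

end
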